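/- arXiv:1405.4476 — 4 statements merged into one kernel-verified Lean document; each statement's English description precedes it below -/
import Mathlib

section
/- Let E be a finite commutative group in which every element g satisfies g*g = 1 (an elementary abelian 2-group) of order 2^r, acting on an abelian group L by additive automorphisms. Then 2^r annihilates the quotient L/Tel(L); that is, for every x ∈ L the element 2^r • x lies in the total eigenlattice Tel(L). -/
/-- The eigenlattice of a character `lam : E →* ℤˣ` for an action of `E` on an
abelian group `L`: the additive subgroup of elements `x` with `g • x = (lam g : ℤ) • x`
for all `g`. -/
def eigenlattice {E : Type*} [Group E] (L : Type*) [AddCommGroup L]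
    [DistribMulAction E L] (lam : E →* ℤˣ) : AddSubgroup L where
  carrier := {x : L | ∀ g : E, g • x = (lam g : ℤ) • x}
  zero_mem' := by intro g; simp
  add_mem' := by intro a b ha hb g; rw [smul_add, ha g, hb g, smul_add]
  neg_mem' := by intro a ha g; rw [smul_neg, ha g, smul_neg]

/-- The total eigenlattice: the subgroup generated by all the eigenlattices. -/
def tel (E L : Type*) [Group E] [AddCommGroup L] [DistribMulAction E L] :
    AddSubgroup L :=
  ⨆ lam : E →* ℤˣ, eigenlattice L lam

/-- A group of order at most `2 ^ r` has a generating set of at most `r` elements. -/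
lemma exists_small_generating_set (E : Type*) [Group E] [Fintype E] (r : ℕ)
    (hcard : Fintype.card E = 2 ^ r) :
    ∃ S : Finset E, S.card ≤ r ∧ Subgroup.closure (S : Set E) = ⊤ := by
  classical
  have main : ∀ k : ℕ, ∃ S : Finset E, S.card ≤ k ∧
      (Subgroup.closure (S : Set E) = ⊤ ∨
        2 ^ k ≤ Nat.card (Subgroup.closure (S : Set E))) := by
    intro k
    induction k with
    | zero =>
        refine ⟨∅, le_refl _, Or.inr ?_⟩
        simp [Nat.one_le_iff_ne_zero, Nat.card_pos.ne']
    | succ k ih =>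
        obtain ⟨S, hSc, hS⟩ := ih
        rcases hS with htop | hle
        · exact ⟨S, hSc.trans (Nat.le_succ k), Or.inl htop⟩
        · by_cases htop : Subgroup.closure (S : Set E) = ⊤
          · exact ⟨S, hSc.trans (Nat.le_succ k), Or.inl htop⟩
          · obtain ⟨a, ha⟩ : ∃ a : E, a ∉ Subgroup.closure (S : Set E) := by
              by_contra hcon
              push_neg at hcon
              exact htop ((Subgroup.eq_top_iff' _).mpr hcon)
            refine ⟨insert a S, ?_, Or.inr ?_⟩
            · exact (Finset.card_insert_le a S).trans (Nat.succ_le_succ hSc)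
            · set H := Subgroup.closure (S : Set E)
              set K := Subgroup.closure ((insert a S : Finset E) : Set E)
              have hHK : H ≤ K := by
                apply Subgroup.closure_mono
                intro z hz
                simp only [Finset.coe_insert, Set.mem_insert_iff]
                exact Or.inr hz
              have haK : a ∈ K := Subgroup.subset_closure (by simp)
              have hlt : Nat.card H < Nat.card K := by
                rw [← SetLike.coe_sort_coe H, ← SetLike.coe_sort_coe K,
                  Nat.card_coe_set_eq, Nat.card_coe_set_eq]
                refine Set.ncard_lt_ncard ?_ (Set.toFinite _)
                exact ⟨fun z hz => hHK hz, fun hsub => ha (hsub haK)⟩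
              have hdvd : Nat.card H ∣ Nat.card K := Subgroup.card_dvd_of_le hHK
              obtain ⟨c, hc⟩ := hdvd
              have hHpos : 0 < Nat.card H := Nat.card_pos
              have hc2 : 2 ≤ c := by
                by_contra hcon
                push_neg at hcon
                interval_cases c <;> omega
              calc 2 ^ (k + 1) = 2 ^ k * 2 := by ring
                _ ≤ Nat.card H * c := Nat.mul_le_mul hle hc2
                _ = Nat.card K := hc.symm
  obtain ⟨S, hSc, hS⟩ := main r
  refine ⟨S, hSc, ?_⟩
  rcases hS with htop | hle
  · exact htop
  · have h1 : Nat.card (Subgroup.closure (S : Set E)) ≤ Nat.card E :=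
      Subgroup.card_le_card_group _
    have h2 : Nat.card E = 2 ^ r := by rw [Nat.card_eq_fintype_card, hcard]
    exact Subgroup.eq_top_of_card_eq _ (le_antisymm (h2 ▸ h1) (h2 ▸ hle))

/-- If `E` is an elementary abelian 2-group of order `2 ^ r` acting on an abelian
group `L`, then `2 ^ r` annihilates `L / Tel(L)`, i.e. `2 ^ r • x ∈ Tel(L)` for
every `x ∈ L`. -/
theorem pow_two_smul_mem_tel (E L : Type*) [CommGroup E] [Fintype E]
    [AddCommGroup L] [DistribMulAction E L]
    (h2 : ∀ g : E, g * g = 1) (r : ℕ) (hcard : Fintype.card E = 2 ^ r)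
    (x : L) : (2 ^ r : ℕ) • x ∈ tel E L := by
  classical
  have hzc : ∀ (g : E) (n : ℤ) (y : L), g • (n • y) = n • (g • y) := fun g n y =>
    map_zsmul (DistribMulAction.toAddMonoidHom L g) n y
  have hcomm : ∀ (g a : E) (z : L), g • a • z = a • g • z := by
    intro g a z
    rw [← mul_smul, mul_comm, mul_smul]
  set P : Finset E → Set L := fun S => {y : L | ∀ g ∈ S, g • y = y ∨ g • y = -y} with hP
  -- Main induction: 2^|S| • x lies in the closure of simultaneous ±1-"eigenvectors" of S
  have key : ∀ S : Finset E, (2 ^ S.card : ℕ) • x ∈ AddSubgroup.closure (P S) := by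
    intro S
    induction S using Finset.induction_on with
    | empty =>
        simp only [Finset.card_empty, pow_zero, one_smul]
        exact AddSubgroup.subset_closure (by intro g hg; simp at hg)
    | @insert a S hg ih =>
        have hle : AddSubgroup.closure (P S) ≤
            (AddSubgroup.closure (P (insert a S))).comap (zsmulAddGroupHom 2) := by
          rw [AddSubgroup.closure_le]
          intro y hy
          simp only [SetLike.mem_coe, AddSubgroup.mem_comap, zsmulAddGroupHom_apply]
          have h1 : y + a • y ∈ P (insert a S) := by
            intro g hgmem
            rcases Finset.mem_insert.mp hgmem with h | h
            · subst h
              left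
              rw [smul_add, smul_smul, h2 g, one_smul]
              abel
            · rcases hy g h with hgy | hgy
              · left
                rw [smul_add, hgy, hcomm, hgy]
              · right
                rw [smul_add, hgy, hcomm, hgy, smul_neg]
                abel
          have h1' : y - a • y ∈ P (insert a S) := by
            intro g hgmem
            rcases Finset.mem_insert.mp hgmem with h | h
            · subst h
              right
              rw [smul_sub, smul_smul, h2 g, one_smul]
              abel
            · rcases hy g h with hgy | hgy
              · left
                rw [smul_sub, hgy, hcomm, hgy]
              · right
                rw [smul_sub, hgy, hcomm, hgy, smul_neg]
                abel
          have hdecomp : (2 : ℤ) • y = (y + a • y) + (y - a • y) := by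
            rw [two_smul]; abel
          rw [hdecomp]
          exact add_mem (AddSubgroup.subset_closure h1) (AddSubgroup.subset_closure h1')
        have h2x := hle ih
        simp only [AddSubgroup.mem_comap, zsmulAddGroupHom_apply, two_zsmul] at h2x
        rw [Finset.card_insert_of_notMem hg, pow_succ, mul_comm, mul_smul, two_nsmul]
        exact h2x
  -- Every simultaneous ±1-eigenvector of a generating set lies in some eigenlattice
  have hPsub : ∀ S : Finset E, Subgroup.closure (S : Set E) = ⊤ →
      P S ⊆ (tel E L : Set L) := by
    intro S htop y hy
    have hall : ∀ g : E, g • y = y ∨ g • y = -y := by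
      intro g
      have hgmem : g ∈ Subgroup.closure (S : Set E) := htop ▸ Subgroup.mem_top g
      induction hgmem using Subgroup.closure_induction with
      | mem z hz => exact hy z hz
      | one => left; rw [one_smul]
      | mul g h _ _ hgy hhy =>
          rw [mul_smul]
          rcases hhy with hhy | hhy
          · rw [hhy]; exact hgy
          · rw [hhy, smul_neg]
            rcases hgy with hgy | hgy
            · right; rw [hgy]
            · left; rw [hgy, neg_neg]
      | inv g _ hgy =>
          rw [inv_eq_of_mul_eq_one_right (h2 g)]
          exact hgy
    by_cases hy2 : y + y = 0
    · have hneg : -y = y := by rw [neg_eq_iff_add_eq_zero, hy2]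
      have : y ∈ eigenlattice L (1 : E →* ℤˣ) := by
        intro g
        simp only [MonoidHom.one_apply, Units.val_one, one_smul]
        rcases hall g with h | h
        · exact h
        · rw [h, hneg]
      exact le_iSup (fun lam : E →* ℤˣ => eigenlattice L lam) 1 this
    · set ε : E → ℤˣ := fun g => if g • y = y then 1 else -1 with hε
      have hεy : ∀ g : E, g • y = (ε g : ℤ) • y := by
        intro g
        by_cases h : g • y = y
        · simp only [hε, if_pos h, Units.val_one, one_smul]; exact h
        · have hn := (hall g).resolve_left h
          simp only [hε, if_neg h, Units.val_neg, Units.val_one, neg_smul, one_smul]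
          exact hn
      have huniq : ∀ u v : ℤˣ, (u : ℤ) • y = (v : ℤ) • y → u = v := by
        intro u v huv
        rcases Int.units_eq_one_or u with rfl | rfl <;>
          rcases Int.units_eq_one_or v with rfl | rfl <;>
            simp only [Units.val_one, Units.val_neg, one_smul, neg_smul] at huv ⊢
        · exact absurd (add_eq_zero_iff_eq_neg.mpr huv) hy2
        · exact absurd (add_eq_zero_iff_eq_neg.mpr huv.symm) hy2
      set lam : E →* ℤˣ :=
        { toFun := ε
          map_one' := by
            apply huniq
            rw [← hεy 1, one_smul, Units.val_one, one_smul]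
          map_mul' := by
            intro g h
            apply huniq
            rw [← hεy (g * h), mul_smul, hεy h, hzc, hεy g, smul_smul, Units.val_mul,
              mul_comm] } with hlam
      have : y ∈ eigenlattice L lam := fun g => hεy g
      exact le_iSup (fun lam : E →* ℤˣ => eigenlattice L lam) lam this
  obtain ⟨S, hSc, hStop⟩ := exists_small_generating_set E r hcard
  have hkey := key S
  have hmem : (2 ^ r : ℕ) • x ∈ AddSubgroup.closure (P S) := by
    have : (2 ^ r : ℕ) • x = (2 ^ (r - S.card) : ℕ) • ((2 ^ S.card : ℕ) • x) := by
      rw [← mul_smul, ← pow_add, Nat.sub_add_cancel hSc]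
    rw [this]
    exact AddSubgroup.nsmul_mem _ hkey _
  exact ((AddSubgroup.closure_le _).mpr (hPsub S hStop)) hmem
end

section
/- Let E be a finite commutative group in which every element g satisfies g*g = 1 (an elementary abelian 2-group) of order 2^r, acting ℚ-linearly on a ℚ-vector space V and preserving a ℚ-bilinear form B. Let J be an E-invariant ℤ-submodule of V, and for each character λ : E →* ℤˣ let J_λ := {x ∈ J | g • x = (λ g : ℚ) • x for all g ∈ E}. Suppose there is a positive integer m such that m·B(x, y) ∈ ℤ for every character λ and all x, y ∈ J_λ. Then m·4^r·B(x, y) ∈ ℤ for all x, y ∈ J; in particular, J is nearly lattice-integral with respect to B. -/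
def intUnitsEquivZMod2 : Additive ℤˣ ≃+ ZMod 2 where
  toFun u := if u.toMul = 1 then 0 else 1
  invFun c := Additive.ofMul (if c = 0 then 1 else -1)
  left_inv := by decide
  right_inv := by decide
  map_add' := by decide

section aux
variable {E : Type*} [CommGroup E] [Fintype E]

/-- The `ZMod 2`-module structure on `Additive E`. -/
noncomputable def zmod2ModuleOfSq (h2 : ∀ g : E, g * g = 1) : Module (ZMod 2) (Additive E) :=
  AddCommGroup.zmodModule (n := 2) (fun x => by
    rw [two_nsmul]
    exact congrArg Additive.ofMul (h2 x.toMul))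

lemma exists_char_neg (h2 : ∀ g : E, g * g = 1) {g : E} (hg : g ≠ 1) :
    ∃ lam : E →* ℤˣ, lam g = -1 := by
  letI := zmod2ModuleOfSq h2
  have hgne : (Additive.ofMul g : Additive E) ≠ 0 := fun hh => hg hh
  obtain ⟨φ, hφ⟩ : ∃ φ : Module.Dual (ZMod 2) (Additive E), φ (Additive.ofMul g) ≠ 0 := by
    by_contra h'
    push_neg at h'
    exact hgne ((Module.forall_dual_apply_eq_zero_iff (ZMod 2) _).mp h')
  have hφ1 : φ (Additive.ofMul g) = 1 := by
    revert hφ; generalize φ (Additive.ofMul g) = c; revert c; decide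
  let e2 : Additive ℤˣ ≃ₗ[ZMod 2] ZMod 2 :=
    intUnitsEquivZMod2.toLinearEquiv (fun c x => ZMod.map_smul intUnitsEquivZMod2 c x)
  let ψ : Additive E →ₗ[ZMod 2] Additive ℤˣ := (e2.symm : ZMod 2 →ₗ[ZMod 2] Additive ℤˣ).comp φ
  refine ⟨MonoidHom.toAdditive.symm ψ.toAddMonoidHom, ?_⟩
  show (ψ (Additive.ofMul g)).toMul = -1
  have : ψ (Additive.ofMul g) = e2.symm 1 := by
    simp [ψ, hφ1]
  rw [this]
  rfl

lemma card_chars (h2 : ∀ g : E, g * g = 1) {r : ℕ} (hcard : Fintype.card E = 2 ^ r) :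
    Nat.card (E →* ℤˣ) = 2 ^ r := by
  letI := zmod2ModuleOfSq h2
  let e2 : Additive ℤˣ ≃ₗ[ZMod 2] ZMod 2 :=
    intUnitsEquivZMod2.toLinearEquiv (fun c x => ZMod.map_smul intUnitsEquivZMod2 c x)
  let e1 : (Additive E →+ Additive ℤˣ) ≃ (Additive E →ₗ[ZMod 2] Additive ℤˣ) :=
    { toFun := AddMonoidHom.toZModLinearMap 2
      invFun := LinearMap.toAddMonoidHom
      left_inv := fun _ => rfl
      right_inv := fun _ => rfl }
  let e3 : (E →* ℤˣ) ≃ Module.Dual (ZMod 2) (Additive E) :=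
    (MonoidHom.toAdditive.trans e1).trans
      (LinearEquiv.arrowCongr (LinearEquiv.refl _ _) e2).toEquiv
  rw [Nat.card_congr e3]
  letI : Finite (Module.Dual (ZMod 2) (Additive E)) := DFunLike.finite _
  letI : Fintype (Module.Dual (ZMod 2) (Additive E)) := Fintype.ofFinite _
  rw [Nat.card_eq_fintype_card]
  have hfr : Module.finrank (ZMod 2) (Additive E) = r := by
    have hc : Fintype.card (Additive E) = 2 ^ Module.finrank (ZMod 2) (Additive E) := by
      have := Module.card_eq_pow_finrank (K := ZMod 2) (V := Additive E)
      simpa [ZMod.card] using this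
    have : (2:ℕ) ^ r = 2 ^ Module.finrank (ZMod 2) (Additive E) := by
      rw [← hc, ← hcard]; exact Fintype.card_congr Additive.ofMul
    exact (Nat.pow_right_injective (le_refl 2) this).symm
  have := Module.card_eq_pow_finrank (K := ZMod 2) (V := Module.Dual (ZMod 2) (Additive E))
  rw [this, ZMod.card, Subspace.dual_finrank_eq, hfr]

end aux


/-- Let `E` be an elementary abelian 2-group of order `2 ^ r` acting
`ℚ`-linearly on `V`, preserving a bilinear form `B`, and let `J` be an
`E`-invariant `ℤ`-submodule.  If `m > 0` is such that `m • B` is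
integer-valued on every eigenlattice `J_lam`, then `m * 4 ^ r • B` is
integer-valued on `J`; in particular `J` is nearly lattice-integral. -/
theorem nli_of_eigenlattices_integral (V : Type*) [AddCommGroup V] [Module ℚ V]
    (E : Type*) [CommGroup E] [Fintype E] (h2 : ∀ g : E, g * g = 1)
    (r : ℕ) (hcard : Fintype.card E = 2 ^ r)
    (ρ : E →* (V ≃ₗ[ℚ] V)) (B : V →ₗ[ℚ] V →ₗ[ℚ] ℚ)
    (hB : ∀ (g : E) (x y : V), B (ρ g x) (ρ g y) = B x y)
    (J : Submodule ℤ V) (hJinv : ∀ (g : E), ∀ x ∈ J, ρ g x ∈ J)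
    (m : ℕ) (hm : 0 < m)
    (h : ∀ lam : E →* ℤˣ, ∀ x ∈ J, ∀ y ∈ J,
      (∀ g : E, ρ g x = (((lam g : ℤˣ) : ℤ) : ℚ) • x) →
      (∀ g : E, ρ g y = (((lam g : ℤˣ) : ℤ) : ℚ) • y) →
      ∃ k : ℤ, (m : ℚ) * B x y = (k : ℚ)) :
    ∀ x ∈ J, ∀ y ∈ J, ∃ k : ℤ, ((m : ℚ) * (4 : ℚ) ^ r) * B x y = (k : ℚ) := by
  classical
  intro x hx y hy
  letI : Finite (E →* ℤˣ) := DFunLike.finite _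
  letI : Fintype (E →* ℤˣ) := Fintype.ofFinite _
  set N : ℕ := Fintype.card (E →* ℤˣ) with hNdef
  have hN : N = 2 ^ r := by
    rw [hNdef, Fintype.card_eq_nat_card]; exact card_chars h2 hcard
  have hmul : ∀ (g g' : E) (v : V), ρ (g * g') v = ρ g (ρ g' v) := by
    intro g g' v; rw [map_mul]; rfl
  -- coefficient function
  set c : (E →* ℤˣ) → E → ℚ := fun lam g => (((lam g : ℤˣ) : ℤ) : ℚ) with hc
  have hc_mul : ∀ lam : E →* ℤˣ, ∀ g g' : E, c lam (g * g') = c lam g * c lam g' := by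
    intro lam g g'; simp [hc]
  -- projections
  set P : (E →* ℤˣ) → V → V := fun lam v => ∑ g : E, c lam g • ρ g v with hP
  -- eigen property
  have hceig : ∀ (lam : E →* ℤˣ) (v : V) (g : E), ρ g (P lam v) = c lam g • P lam v := by
    intro lam v g
    have step : ρ g (P lam v) = ∑ g' : E, c lam g' • ρ (g * g') v := by
      rw [hP, map_sum]
      exact Finset.sum_congr rfl fun g' _ => by rw [map_smul, ← hmul]
    rw [step, hP, Finset.smul_sum]
    refine Fintype.sum_equiv (Equiv.mulLeft g) _ _ fun g' => ?_
    simp only [Equiv.coe_mulLeft]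
    rw [smul_smul, ← hc_mul, ← mul_assoc, h2, one_mul]
  -- membership
  have hPJ : ∀ (lam : E →* ℤˣ) (v : V), v ∈ J → P lam v ∈ J := by
    intro lam v hv
    refine Submodule.sum_mem _ fun g _ => ?_
    have : c lam g • ρ g v = ((lam g : ℤˣ) : ℤ) • ρ g v := by
      rw [hc]; exact Int.cast_smul_eq_zsmul ℚ _ _
    rw [this]
    exact Submodule.smul_mem _ _ (hJinv g v hv)
  -- orthogonality of characters
  have orth : ∀ g : E, g ≠ 1 → ∑ lam : E →* ℤˣ, c lam g = 0 := by
    intro g hg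
    obtain ⟨lam0, hl0⟩ := exists_char_neg h2 hg
    have hswap : (∑ lam : E →* ℤˣ, c (lam0 * lam) g) = ∑ lam : E →* ℤˣ, c lam g :=
      Fintype.sum_equiv (Equiv.mulLeft lam0) _ _ fun lam => rfl
    have hneg : ∀ lam : E →* ℤˣ, c (lam0 * lam) g = - c lam g := by
      intro lam; simp [hc, hl0]
    have hS : (∑ lam : E →* ℤˣ, c lam g) = - ∑ lam : E →* ℤˣ, c lam g :=
      hswap.symm.trans (by
        rw [Finset.sum_congr rfl fun lam _ => hneg lam, Finset.sum_neg_distrib])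
    linarith
  -- sum of projections
  have hsum : ∀ v : V, (∑ lam : E →* ℤˣ, P lam v) = (N : ℚ) • v := by
    intro v
    rw [hP]
    rw [Finset.sum_comm]
    have : ∀ g : E, (∑ lam : E →* ℤˣ, c lam g • ρ g v)
        = (∑ lam : E →* ℤˣ, c lam g) • ρ g v := by
      intro g; rw [Finset.sum_smul]
    rw [Finset.sum_congr rfl fun g _ => this g]
    rw [Finset.sum_eq_single_of_mem 1 (Finset.mem_univ 1)
      (fun g _ hg => by rw [orth g hg, zero_smul])]
    have h1 : (∑ lam : E →* ℤˣ, c lam (1 : E)) = (N : ℚ) := by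
      have : ∀ lam : E →* ℤˣ, c lam (1 : E) = 1 := by intro lam; simp [hc]
      rw [Finset.sum_congr rfl fun lam _ => this lam]
      simp [hNdef]
    rw [h1, map_one]
    rfl
  -- cross terms vanish
  have cross : ∀ lam mu : E →* ℤˣ, lam ≠ mu → B (P lam x) (P mu y) = 0 := by
    intro lam mu hne
    obtain ⟨g, hgne⟩ : ∃ g : E, lam g ≠ mu g := by
      by_contra h'
      push_neg at h'
      exact hne (MonoidHom.ext h')
    have hprod : c lam g * c mu g = -1 := by
      rcases Int.units_eq_one_or (lam g) with h1 | h1 <;>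
        rcases Int.units_eq_one_or (mu g) with h2' | h2'
      · exact absurd (h1.trans h2'.symm) hgne
      · simp [hc, h1, h2']
      · simp [hc, h1, h2']
      · exact absurd (h1.trans h2'.symm) hgne
    have : B (P lam x) (P mu y) = (c lam g * c mu g) * B (P lam x) (P mu y) := by
      conv_lhs => rw [← hB g (P lam x) (P mu y), hceig, hceig]
      simp only [map_smul, LinearMap.smul_apply, smul_eq_mul]
      ring
    rw [hprod] at this
    linarith
  -- diagonal terms
  have diag : ∀ lam : E →* ℤˣ, ∃ k : ℤ, (m : ℚ) * B (P lam x) (P lam y) = (k : ℚ) := by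
    intro lam
    exact h lam (P lam x) (hPJ lam x hx) (P lam y) (hPJ lam y hy)
      (fun g => hceig lam x g) (fun g => hceig lam y g)
  choose k hk using diag
  refine ⟨∑ lam : E →* ℤˣ, k lam, ?_⟩
  have key : ((N : ℚ)) ^ 2 * B x y = ∑ lam : E →* ℤˣ, B (P lam x) (P lam y) := by
    calc ((N : ℚ)) ^ 2 * B x y = B ((N : ℚ) • x) ((N : ℚ) • y) := by
          simp only [map_smul, LinearMap.smul_apply, smul_eq_mul]; ring
      _ = B (∑ lam : E →* ℤˣ, P lam x) (∑ mu : E →* ℤˣ, P mu y) := by rw [hsum, hsum]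
      _ = ∑ lam : E →* ℤˣ, ∑ mu : E →* ℤˣ, B (P lam x) (P mu y) := by
          simp only [map_sum, LinearMap.coe_sum, Finset.sum_apply]
          exact Finset.sum_comm
      _ = ∑ lam : E →* ℤˣ, B (P lam x) (P lam y) := by
          refine Finset.sum_congr rfl fun lam _ => ?_
          exact Finset.sum_eq_single_of_mem lam (Finset.mem_univ lam)
            (fun mu _ hmu => cross lam mu (Ne.symm hmu))
  have h4 : (4 : ℚ) ^ r = ((N : ℚ)) ^ 2 := by
    rw [hN]
    push_cast
    rw [← pow_mul, pow_mul']
    norm_num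
  calc ((m : ℚ) * (4 : ℚ) ^ r) * B x y = (m : ℚ) * (((N : ℚ)) ^ 2 * B x y) := by
        rw [h4]; ring
    _ = ∑ lam : E →* ℤˣ, (m : ℚ) * B (P lam x) (P lam y) := by rw [key, Finset.mul_sum]
    _ = ∑ lam : E →* ℤˣ, ((k lam : ℤ) : ℚ) := Finset.sum_congr rfl fun lam _ => hk lam
    _ = ((∑ lam : E →* ℤˣ, k lam : ℤ) : ℚ) := by push_cast; rfl
end

section
/- In the 3-dimensional algebra A of type 2A with basis a, b, c, the Killing form κ satisfies κ(p, p) = 17/16 for each basis vector p ∈ {a, b, c} and κ(p, q) = 1/4 for all distinct basis vectors p, q ∈ {a, b, c}. -/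
noncomputable section

/-- The underlying space of the dihedral algebra of type 2A: 3-dimensional over ℚ. -/
abbrev TwoA := Fin 3 → ℚ

/-- The basis vectors `a`, `b`, `c`. -/
def e (i : Fin 3) : TwoA := Pi.single i 1

/-- The index of the third basis vector, distinct from two distinct indices `i`, `j`. -/
def third (i j : Fin 3) : Fin 3 := ⟨(3 - i.val - j.val) % 3, Nat.mod_lt _ (by norm_num)⟩

/-- Products of basis vectors: `p·p = p`, `p·q = (1/8)(p + q - r)`. -/
def mulB (i j : Fin 3) : TwoA :=
  if i = j then e i else (1 / 8 : ℚ) • (e i + e j - e (third i j))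

/-- The bilinear multiplication of the type-2A algebra. -/
def mul2A (x y : TwoA) : TwoA :=
  ∑ i : Fin 3, ∑ j : Fin 3, (x i * y j) • mulB i j

/-- Left multiplication `ad(x) : y ↦ x·y` as a `ℚ`-linear map. -/
def ad (x : TwoA) : TwoA →ₗ[ℚ] TwoA where
  toFun y := mul2A x y
  map_add' y z := by
    simp only [mul2A, Pi.add_apply, mul_add, add_smul]
    rw [← Finset.sum_add_distrib]
    refine Finset.sum_congr rfl fun i _ => ?_
    rw [← Finset.sum_add_distrib]
  map_smul' c y := by
    simp only [mul2A, Pi.smul_apply, smul_eq_mul, RingHom.id_apply, Finset.smul_sum]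
    refine Finset.sum_congr rfl fun i _ => Finset.sum_congr rfl fun j _ => ?_
    rw [smul_smul]
    congr 1
    ring

/-- The Killing form `κ(x, y) = Trace(ad(x) ∘ ad(y))`. -/
def kappa (x y : TwoA) : ℚ := LinearMap.trace ℚ TwoA (ad x ∘ₗ ad y)

/-- The natural form: `ν(p, p) = 1`, `ν(p, q) = 1/8` on basis vectors. -/
def nu (x y : TwoA) : ℚ :=
  ∑ i : Fin 3, ∑ j : Fin 3, x i * y j * (if i = j then 1 else 1 / 8)

theorem LinearMap.trace_eq_trace_toMatrix' {R n : Type*} [CommRing R] [Fintype n] [DecidableEq n]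
    (f : (n → R) →ₗ[R] n → R) : LinearMap.trace R (n → R) f = (LinearMap.toMatrix' f).trace := by
  simpa using Matrix.trace_toLin'_eq (LinearMap.toMatrix' f)

def adMatrix (i : Fin 3) : Matrix (Fin 3) (Fin 3) ℚ :=
  Matrix.of fun k b => mulB i b k

lemma mul2A_e_left (i : Fin 3) (y : TwoA) : mul2A (e i) y = ∑ b : Fin 3, y b • mulB i b := by
  simp [mul2A, e, Pi.single_apply]

lemma toMatrix'_ad_e (i : Fin 3) : LinearMap.toMatrix' (ad (e i)) = adMatrix i := by
  ext k b
  simp [LinearMap.toMatrix'_apply, ad, adMatrix, mul2A_e_left, Pi.single_apply, ite_apply]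

lemma kappa_e_e (i j : Fin 3) : kappa (e i) (e j) = (adMatrix i * adMatrix j).trace := by
  rw [kappa, LinearMap.trace_eq_trace_toMatrix', LinearMap.toMatrix'_comp, toMatrix'_ad_e,
    toMatrix'_ad_e]

lemma adMatrix_eq :
    adMatrix = ![!![1, 1/8, 1/8; 0, 1/8, -1/8; 0, -1/8, 1/8],
      !![1/8, 0, -1/8; 1/8, 1, 1/8; -1/8, 0, 1/8],
      !![1/8, -1/8, 0; -1/8, 1/8, 0; 1/8, 1/8, 1]] := by
  ext i k b
  fin_cases i <;> fin_cases k <;> fin_cases b <;> norm_num [adMatrix, mulB, e, third]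

/-- The Killing form of the type-2A algebra takes value `17/16` on each basis
vector paired with itself and `1/4` on distinct basis vectors. -/
theorem kappa_values :
    (∀ i : Fin 3, kappa (e i) (e i) = 17 / 16) ∧
      (∀ i j : Fin 3, i ≠ j → kappa (e i) (e j) = 1 / 4) := by
  simp only [kappa_e_e, adMatrix_eq]
  refine ⟨fun i => ?_, fun i j hij => ?_⟩
  · fin_cases i <;> simp [Matrix.trace_fin_three] <;> norm_num
  · fin_cases i <;> fin_cases j <;> simp_all [Matrix.trace_fin_three] <;> norm_num

end
end

section
/- In the 3-dimensional algebra A of type 2A with basis a, b, c, the Killing form κ is not proportional to the natural form ν: there is no scalar t ∈ ℚ such that κ(x, y) = t·ν(x, y) for all x, y ∈ A. -/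
noncomputable section

theorem ad_e_apply_e (i j : Fin 3) : ad (e i) (e j) = mulB i j := by
  simp [ad, mul2A, e, Pi.single_apply]

theorem kappa_eq_trace_toMatrix' (x y : TwoA) :
    kappa x y = (LinearMap.toMatrix' (ad x) * LinearMap.toMatrix' (ad y)).trace := by
  rw [kappa, ← LinearMap.toMatrix'_comp, ← Matrix.trace_toLin'_eq, Matrix.toLin'_toMatrix']

theorem toMatrix'_ad_e_zero :
    LinearMap.toMatrix' (ad (e 0)) = !![1, 1/8, 1/8; 0, 1/8, -1/8; 0, -1/8, 1/8] := by
  ext k j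
  rw [LinearMap.toMatrix'_apply, ← e, ad_e_apply_e]
  fin_cases k <;> fin_cases j <;> norm_num [mulB, e, third]

theorem toMatrix'_ad_e_one :
    LinearMap.toMatrix' (ad (e 1)) = !![1/8, 0, -1/8; 1/8, 1, 1/8; -1/8, 0, 1/8] := by
  ext k j
  rw [LinearMap.toMatrix'_apply, ← e, ad_e_apply_e]
  fin_cases k <;> fin_cases j <;> norm_num [mulB, e, third]

theorem kappa_e_zero_e_zero : kappa (e 0) (e 0) = 17 / 16 := by
  rw [kappa_eq_trace_toMatrix', toMatrix'_ad_e_zero]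
  simp [Matrix.trace_fin_three]
  norm_num

theorem kappa_e_zero_e_one : kappa (e 0) (e 1) = 1 / 4 := by
  rw [kappa_eq_trace_toMatrix', toMatrix'_ad_e_zero, toMatrix'_ad_e_one]
  simp [Matrix.trace_fin_three]
  norm_num

theorem nu_e_e (i j : Fin 3) : nu (e i) (e j) = if i = j then 1 else 1 / 8 := by
  rw [nu, Fintype.sum_eq_single i, Fintype.sum_eq_single j] <;> intros <;> simp_all [e]

/-- The Killing form `κ` of the type-2A algebra is not proportional to the
natural form `ν`. -/
theorem kappa_not_proportional_nu :
    ¬ ∃ t : ℚ, ∀ x y : TwoA, kappa x y = t * nu x y := by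
  rintro ⟨t, h⟩
  have h₀₀ := h (e 0) (e 0)
  have h₀₁ := h (e 0) (e 1)
  rw [kappa_e_zero_e_zero, nu_e_e] at h₀₀
  rw [kappa_e_zero_e_one, nu_e_e] at h₀₁
  norm_num at h₀₀ h₀₁
  -- the ratio κ/ν is 17/16 on (a, a) but 2 on (a, b)
  linarith

end
end
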